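/- arXiv:2411.09987 — 3 statements merged into one kernel-verified Lean document; each statement's English description precedes it below -/
import Mathlib

section
/- Let M be a simple matroid with a basis b = {b_0,...,b_d} such that the sets F_{ij} = cl{b_i,b_j} \ {b_i,b_j} partition E(M)\b into pairwise disjoint subsets (a Cremona basis). If F is a flat of M whose support graph G_b(F) is connected (vertices: basis elements b_i in F or with some F_{ij} meeting F; edges: elements of F ∩ F_{ij}), then either F ∩ b equals the full vertex set supp_b(F), or F ∩ b = ∅. -/
open Set

variable {α : Type*}

/-- The set of non-basis elements on the line through `x` and `y`. -/
def Fij (M : Matroid α) (x y : α) : Set α := M.closure {x, y} \ {x, y}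

/-- `b` is a Cremona basis: a base of `M` such that the sets
`Fij = cl{bᵢ,bⱼ} \ {bᵢ,bⱼ}` are pairwise disjoint with union `M.E \ b`. -/
def IsCremonaBasis (M : Matroid α) (b : Set α) : Prop :=
  M.IsBase b ∧
  (∀ x ∈ b, ∀ y ∈ b, ∀ x' ∈ b, ∀ y' ∈ b, x ≠ y → x' ≠ y' →
    ({x, y} : Set α) ≠ {x', y'} → Disjoint (Fij M x y) (Fij M x' y')) ∧
  (⋃ x ∈ b, ⋃ y ∈ b, ⋃ _ : x ≠ y, Fij M x y) = M.E \ b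

/-- The `b`-support of a set `S`. -/
def suppb (M : Matroid α) (b S : Set α) : Set α :=
  (b ∩ S) ∪ ⋃ x ∈ b, ⋃ y ∈ b, ⋃ _ : x ≠ y, ⋃ _ : (S ∩ Fij M x y).Nonempty, ({x, y} : Set α)

/-- Adjacency in the support graph `G_b(S)`: there is an edge between `x` and `y`
for each element of `S ∩ Fij M x y`. -/
def Adjb (M : Matroid α) (b S : Set α) (x y : α) : Prop :=
  x ∈ b ∧ y ∈ b ∧ x ≠ y ∧ (S ∩ Fij M x y).Nonempty

/-- The support graph `G_b(S)` is connected. -/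
def SuppConnected (M : Matroid α) (b S : Set α) : Prop :=
  ∀ x ∈ suppb M b S, ∀ y ∈ suppb M b S, Relation.ReflTransGen (Adjb M b S) x y

/-- The vertex set of the connected component of `x` in the support graph `G_b(S)`. -/
def compOf (M : Matroid α) (b S : Set α) (x : α) : Set α :=
  {y ∈ suppb M b S | Relation.ReflTransGen (Adjb M b S) x y}

/-- A matroid is simple if every pair of (not necessarily distinct) elements
of the ground set is independent. -/
def MSimple (M : Matroid α) : Prop := ∀ e ∈ M.E, ∀ f ∈ M.E, M.Indep {e, f}

/-- A circuit: a minimal dependent set. -/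
def MCircuit (M : Matroid α) (C : Set α) : Prop :=
  C ⊆ M.E ∧ ¬ M.Indep C ∧ ∀ x ∈ C, M.Indep (C \ {x})

/-- A matroid is connected if its ground set is nonempty and every two distinct
elements lie on a common circuit. -/
def MConnected (M : Matroid α) : Prop :=
  M.E.Nonempty ∧ ∀ e ∈ M.E, ∀ f ∈ M.E, e = f ∨ ∃ C, MCircuit M C ∧ e ∈ C ∧ f ∈ C

/-- The rank of a set in a matroid: the supremum of cardinalities of independent subsets. -/
noncomputable def mRank (M : Matroid α) (X : Set α) : ℕ :=
  sSup {n | ∃ I, M.Indep I ∧ I ⊆ X ∧ I.ncard = n}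

/-! If a flat `F` contains a basis element `bᵢ` and meets the line `F_{ij}`, then it contains a
second point `e ≠ bᵢ` of the line through `bᵢ` and `bⱼ`; by simplicity `e ∉ cl{bᵢ}`, so the
exchange axiom puts `bⱼ` in `cl{bᵢ, e} ⊆ F`. Hence membership in `F` propagates along the edges of
`G_b(F)`: once `F` contains one vertex of a connected support graph, it contains all of them. -/

lemma MSimple.notMem_closure_singleton {M : Matroid α} (hM : MSimple M) {e z : α}
    (he : e ∈ M.E) (hz : z ∈ M.E) (hez : e ≠ z) : e ∉ M.closure {z} := by
  have hind : M.Indep {z, e} := hM z hz e he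
  simpa [Set.pair_sdiff_right hez.symm] using hind.notMem_closure_sdiff_of_mem (e := e) (by simp)

lemma Matroid.IsFlat.mem_of_mem_closure_pair {M : Matroid α} {F : Set α} (hF : M.IsFlat F)
    {z w e : α} (hz : z ∈ F) (he : e ∈ F) (hezw : e ∈ M.closure {z, w})
    (hez : e ∉ M.closure {z}) : w ∈ F := by
  rw [Set.pair_comm] at hezw
  have hw : w ∈ M.closure (insert e {z}) := (Matroid.closure_exchange ⟨hezw, hez⟩).1
  rw [← hF.closure]
  exact M.closure_subset_closure (Set.insert_subset he (Set.singleton_subset_iff.2 hz)) hw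

lemma Matroid.IsFlat.mem_of_adjb {M : Matroid α} (hM : MSimple M) {b F : Set α}
    (hF : M.IsFlat F) {z w : α} (hz : z ∈ F) (hzw : Adjb M b F z w) : w ∈ F := by
  obtain ⟨-, -, -, e, heF, hecl, hezw⟩ := hzw
  have hez : e ≠ z := fun h => hezw (Or.inl h)
  exact hF.mem_of_mem_closure_pair hz heF hecl
    (hM.notMem_closure_singleton (hF.subset_ground heF) (hF.subset_ground hz) hez)

lemma Matroid.IsFlat.mem_of_reflTransGen_adjb {M : Matroid α} (hM : MSimple M) {b F : Set α}
    (hF : M.IsFlat F) {z w : α} (hz : z ∈ F) (hzw : Relation.ReflTransGen (Adjb M b F) z w) :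
    w ∈ F := by
  induction hzw with
  | refl => exact hz
  | tail _ hadj ih => exact hF.mem_of_adjb hM ih hadj

lemma suppb_subset (M : Matroid α) (b S : Set α) : suppb M b S ⊆ b := by
  rintro y (⟨hyb, -⟩ | hy)
  · exact hyb
  · simp only [Set.mem_iUnion] at hy
    obtain ⟨u, hu, v, hv, -, -, rfl | rfl⟩ := hy
    exacts [hu, hv]

theorem stmt0_general (M : Matroid α) (hsimple : MSimple M)
    (b : Set α)
    (F : Set α) (hF : M.IsFlat F) (hconn : SuppConnected M b F) :
    F ∩ b = suppb M b F ∨ F ∩ b = ∅ := by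
  rcases Set.eq_empty_or_nonempty (F ∩ b) with h | ⟨x, hxF, hxb⟩
  · exact Or.inr h
  refine Or.inl (Set.Subset.antisymm (fun y hy => Or.inl hy.symm) fun y hy => ?_)
  have hx : x ∈ suppb M b F := Or.inl ⟨hxb, hxF⟩
  exact ⟨hF.mem_of_reflTransGen_adjb hsimple hxF (hconn x hx y hy), suppb_subset M b F hy⟩

/-- For a simple matroid with a Cremona basis `b`, any flat `F` with
connected support graph satisfies `F ∩ b = supp_b(F)` or `F ∩ b = ∅`. -/
theorem stmt0 (M : Matroid α) (hfin : M.E.Finite) (hsimple : MSimple M)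
    (b : Set α) (hb : IsCremonaBasis M b)
    (F : Set α) (hF : M.IsFlat F) (hconn : SuppConnected M b F) :
    F ∩ b = suppb M b F ∨ F ∩ b = ∅ :=
  stmt0_general M hsimple b F hF hconn
end

section
/- Let M be a simple matroid with Cremona basis b, and let F be a flat of M with F ∩ b = ∅ whose support graph G_b(F) is connected. Then F contains at most binom(|supp_b(F)|, 2) elements. -/
open Set

variable {α : Type*}

/-!
Each element of `F` lies on some line `cl{bᵢ, bⱼ}` of the Cremona basis, and `bᵢ, bⱼ` then belong
to the support of `F`. No line carries two elements `e ≠ e'` of `F`: by simplicity and the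
exchange property `cl{e, e'} = cl{bᵢ, bⱼ}`, so the flat `F` would contain `bᵢ ∈ b`. Hence
`e ↦ {bᵢ, bⱼ}` injects `F` into the two-element subsets of its support.
-/

lemma Set.ncard_le_choose_of_injOn {F s : Set α} (hs : s.Finite) {n : ℕ} (g : α → Set α)
    (hg : ∀ e ∈ F, g e ⊆ s ∧ (g e).ncard = n) (hinj : InjOn g F) :
    F.ncard ≤ s.ncard.choose n :=
  ncard_powerset_ncard hs n ▸
    ncard_le_ncard_of_injOn g hg hinj (hs.finite_subsets.subset fun _ ht ↦ ht.1)

lemma MSimple.notMem_closure_singleton_s2 {M : Matroid α} (hM : MSimple M) {a c : α}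
    (ha : a ∈ M.E) (hc : c ∈ M.E) (hac : a ≠ c) : a ∉ M.closure {c} := by
  have hcI : M.Indep {c} := by simpa using hM c hc c hc
  rw [hcI.mem_closure_iff_of_notMem (by simpa using hac)]
  exact (hM a ha c hc).not_dep

lemma MSimple.closure_pair_eq_of_mem_Fij {M : Matroid α} (hM : MSimple M) {x y e e' : α}
    (hy : y ∈ M.E) (he : e ∈ Fij M x y) (he' : e' ∈ Fij M x y) (hee' : e ≠ e') :
    M.closure {e', e} = M.closure {x, y} := by
  have heE : e ∈ M.E := M.closure_subset_ground _ he.1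
  have he'E : e' ∈ M.E := M.closure_subset_ground _ he'.1
  have hey : M.closure {e, y} = M.closure {x, y} :=
    Matroid.closure_insert_congr
      ⟨he.1, hM.notMem_closure_singleton_s2 heE hy fun h ↦ he.2 (by simp [h])⟩
  have he'ye : e' ∈ M.closure {y, e} := by
    rw [pair_comm, hey]
    exact he'.1
  rw [Matroid.closure_insert_congr ⟨he'ye, hM.notMem_closure_singleton_s2 he'E heE hee'.symm⟩,
    pair_comm, hey]

lemma MSimple.subsingleton_inter_Fij {M : Matroid α} (hM : MSimple M) {F : Set α}
    (hF : M.IsFlat F) {x y : α} (hx : x ∈ M.E) (hy : y ∈ M.E) (hxF : x ∉ F) :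
    (F ∩ Fij M x y).Subsingleton := by
  rintro e ⟨heF, he⟩ e' ⟨he'F, he'⟩
  by_contra hee'
  refine hxF (hF.closure ▸ M.closure_subset_closure (pair_subset he'F heF) ?_)
  rw [hM.closure_pair_eq_of_mem_Fij hy he he' hee']
  exact M.mem_closure_of_mem' (mem_insert x {y}) hx

lemma IsCremonaBasis.exists_mem_Fij {M : Matroid α} {b : Set α} (hb : IsCremonaBasis M b)
    {e : α} (he : e ∈ M.E \ b) : ∃ x ∈ b, ∃ y ∈ b, x ≠ y ∧ e ∈ Fij M x y := by
  rw [← hb.2.2] at he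
  simpa only [mem_iUnion, exists_prop] using he

lemma pair_subset_suppb {M : Matroid α} {b S : Set α} {x y e : α} (hx : x ∈ b) (hy : y ∈ b)
    (hxy : x ≠ y) (heS : e ∈ S) (he : e ∈ Fij M x y) : {x, y} ⊆ suppb M b S := by
  refine subset_union_right.trans' ?_
  simp only [subset_def, mem_iUnion]
  exact fun z hz ↦ ⟨x, hx, y, hy, hxy, ⟨e, heS, he⟩, hz⟩

theorem stmt2_general (M : Matroid α) (hfin : M.E.Finite) (hsimple : MSimple M)
    (b : Set α) (hb : IsCremonaBasis M b)
    (F : Set α) (hF : M.IsFlat F) (hFb : F ∩ b = ∅) :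
    F.ncard ≤ Nat.choose (suppb M b F).ncard 2 := by
  have hbE : b ⊆ M.E := hb.1.subset_ground
  have hFb' : Disjoint F b := disjoint_iff_inter_eq_empty.2 hFb
  choose! p hp q hq hpq hpqF using fun e (he : e ∈ F) ↦
    hb.exists_mem_Fij ⟨hF.subset_ground he, hFb'.notMem_of_mem_left he⟩
  have hsupp : (suppb M b F).Finite := hfin.subset ((suppb_subset M b F).trans hbE)
  refine ncard_le_choose_of_injOn hsupp (fun e ↦ {p e, q e}) (fun e he ↦
    ⟨pair_subset_suppb (hp e he) (hq e he) (hpq e he) he (hpqF e he), ncard_pair (hpq e he)⟩) ?_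
  intro e he e' he' hee'
  have he'Fij : e' ∈ Fij M (p e) (q e) := by
    simpa only [Fij, hee'] using hpqF e' he'
  exact hsimple.subsingleton_inter_Fij hF (hbE (hp e he)) (hbE (hq e he))
    (hFb'.notMem_of_mem_right (hp e he)) ⟨he, hpqF e he⟩ ⟨he', he'Fij⟩

/-- A non-basis flat with connected support graph has at most
`binom(|supp_b(F)|, 2)` elements. -/
theorem stmt2 (M : Matroid α) (hfin : M.E.Finite) (hsimple : MSimple M)
    (b : Set α) (hb : IsCremonaBasis M b)
    (F : Set α) (hF : M.IsFlat F) (hFb : F ∩ b = ∅) (hconn : SuppConnected M b F) :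
    F.ncard ≤ Nat.choose (suppb M b F).ncard 2 :=
  stmt2_general M hfin hsimple b hb F hF hFb
end

section
/- Let M be a simple connected matroid of rank d+1 ≥ 3 with two different Cremona bases b and b*. Then every connected component H of the support graph G_b(b*) satisfies: V(H) ∩ b* consists of exactly one element b_0 (which lies in b ∩ b*), and H is a simple star with center b_0, i.e., H has |V(H)| − 1 edges, each connecting b_0 to a distinct other vertex of H. -/
/-
An edge of `G_b(b*)` cannot join two vertices of `b*`, which is independent. Nor can it join two
vertices `y, z ∉ b*`: writing `y` and `z` on lines of `b*`, the element `s ∈ b*` on the line `yz`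
must be one of the points of `b*` spanning these lines, so the line `yz` is also spanned by two
points `s, q ∈ b* \ b`. Every element of `M` then lies in the closure of `{y, z}` or of
`b \ {y, z}`, and as `b` has a third element this separation contradicts connectivity. Hence
`G_b(b*)` is bipartite between `b ∩ b*` and `b \ b*`. A vertex `u ∉ b*` with neighbour `a` along
an edge `t` lies on the line of `b*` through `t` and `a`; since the lines of the Cremona basis `b*`
are disjoint, `u` has one neighbour, joined by one edge, so every component is a star centred at
its unique vertex in `b*`.
-/

open Set

variable {α : Type*}

variable {M : Matroid α} {b bs A B C I J X Y : Set α} {a c e f g p q s t u v w x y z : α}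

lemma Matroid.indep_of_subset_closure_of_encard_le [M.RankFinite] (hY : M.Indep Y)
    (hYX : Y ⊆ M.closure X) (hXY : X.encard ≤ Y.encard) : M.Indep X :=
  (M.isRkFinite_set X).indep_of_encard_le_eRk <| calc
    X.encard ≤ Y.encard := hXY
    _ = M.eRk Y := hY.eRk_eq_encard.symm
    _ ≤ M.eRk (M.closure X) := M.eRk_mono hYX
    _ = M.eRk X := M.eRk_closure_eq X

lemma Matroid.Indep.union_indep_of_subset_closure [M.RankFinite] (hAB : M.Indep (A ∪ B))
    (hdj : Disjoint A B) (hI : M.Indep I) (hIA : I ⊆ M.closure A) (hJ : M.Indep J)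
    (hJB : J ⊆ M.closure B) : M.Indep (I ∪ J) := by
  have hA := hAB.subset subset_union_left
  have hB := hAB.subset subset_union_right
  obtain ⟨I', hI', hII'⟩ := hI.subset_isBasis_of_subset hIA
  obtain ⟨J', hJ', hJJ'⟩ := hJ.subset_isBasis_of_subset hJB
  refine (M.indep_of_subset_closure_of_encard_le hAB ?_ ?_).subset (union_subset_union hII' hJJ')
  · refine union_subset ((M.subset_closure A).trans ?_) ((M.subset_closure B).trans ?_)
    · rw [← M.closure_closure A, ← hI'.closure_eq_closure]
      exact M.closure_subset_closure subset_union_left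
    · rw [← M.closure_closure B, ← hJ'.closure_eq_closure]
      exact M.closure_subset_closure subset_union_right
  · calc (I' ∪ J').encard ≤ I'.encard + J'.encard := encard_union_le _ _
      _ = A.encard + B.encard := by
        rw [hI'.encard_eq_encard hA.isBasis_closure, hJ'.encard_eq_encard hB.isBasis_closure]
      _ = (A ∪ B).encard := (encard_union_eq hdj).symm

lemma Matroid.Indep.mem_of_mem_closure (hI : M.Indep I) (hJI : J ⊆ I) (he : e ∈ I)
    (heJ : e ∈ M.closure J) : e ∈ J :=
  (hI.closure_inter_eq_self_of_subset hJI).subset ⟨heJ, he⟩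

lemma Matroid.Indep.notMem_fij (hI : M.Indep I) (hy : y ∈ I) (hz : z ∈ I)
    (hx : x ∈ Fij M y z) : x ∉ I :=
  fun hxI ↦ hx.2 (hI.mem_of_mem_closure (pair_subset hy hz) hxI hx.1)

lemma fij_comm (M : Matroid α) (x y : α) : Fij M x y = Fij M y x := by
  rw [Fij, Fij, pair_comm]

lemma mem_closure_pair_cases (hy : y ∈ A ∪ B) (hz : z ∈ A ∪ B) (hx : x ∈ M.closure {y, z}) :
    x ∈ M.closure A ∨ x ∈ M.closure B ∨ ∃ a ∈ A, ∃ c ∈ B, x ∈ M.closure {a, c} := by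
  rcases hy with hy | hy <;> rcases hz with hz | hz
  · exact .inl (M.closure_subset_closure (pair_subset hy hz) hx)
  · exact .inr (.inr ⟨y, hy, z, hz, hx⟩)
  · exact .inr (.inr ⟨z, hz, y, hy, pair_comm y z ▸ hx⟩)
  · exact .inr (.inl (M.closure_subset_closure (pair_subset hy hz) hx))

lemma MCircuit.subset_closure_or_disjoint [M.RankFinite] (hC : MCircuit M C)
    (hAB : M.Indep (A ∪ B)) (hdj : Disjoint A B) (hE : M.E ⊆ M.closure A ∪ M.closure B) :
    C ⊆ M.closure A ∨ Disjoint C (M.closure A) := by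
  by_contra! h
  obtain ⟨w, hwC, hwA⟩ := not_subset.1 h.1
  obtain ⟨a, haC, haA⟩ := not_disjoint_iff.1 h.2
  refine hC.2.1 ?_
  rw [← inter_union_sdiff C (M.closure A)]
  refine hAB.union_indep_of_subset_closure hdj ((hC.2.2 w hwC).subset ?_) inter_subset_right
    ((hC.2.2 a haC).subset ?_) ?_
  · exact fun x hx ↦ ⟨hx.1, fun hxw ↦ hwA (hxw ▸ hx.2)⟩
  · exact fun x hx ↦ ⟨hx.1, fun hxa ↦ hx.2 (hxa ▸ haA)⟩
  · exact fun x hx ↦ (hE (hC.1 hx.1)).resolve_left hx.2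

lemma MConnected.not_ground_subset_closure_union [M.RankFinite] (hconn : MConnected M)
    (hb : M.Indep b) (hA : A ⊆ b) (ha : a ∈ A) (hw : w ∈ b \ A) :
    ¬ M.E ⊆ M.closure A ∪ M.closure (b \ A) := by
  intro hE
  have hwA : w ∉ M.closure A := fun h ↦ hw.2 (hb.mem_of_mem_closure hA hw.1 h)
  have hbE := hb.subset_ground
  obtain h | ⟨C, hC, haC, hwC⟩ := hconn.2 a (hbE (hA ha)) w (hbE hw.1)
  · exact hw.2 (h ▸ ha)
  have hAb : M.Indep (A ∪ b \ A) := by rwa [union_sdiff_cancel hA]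
  rcases hC.subset_closure_or_disjoint hAb disjoint_sdiff_right hE with hCA | hCA
  · exact hwA (hCA hwC)
  · exact hCA.notMem_of_mem_left haC (M.mem_closure_of_mem' ha (hbE (hA ha)))

lemma MSimple.notMem_closure_singleton_s7 (hsimple : MSimple M) (he : e ∈ M.E) (hf : f ∈ M.E)
    (hef : e ≠ f) : e ∉ M.closure {f} := by
  simpa [pair_sdiff_left hef] using
    (hsimple e he f hf).notMem_closure_sdiff_of_mem (mem_insert e {f})

lemma MSimple.mem_closure_pair_swap (hsimple : MSimple M) (he : e ∈ M.E) (hg : g ∈ M.E)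
    (heg : e ≠ g) (h : e ∈ M.closure {f, g}) : f ∈ M.closure {e, g} :=
  (M.closure_exchange ⟨h, hsimple.notMem_closure_singleton_s7 he hg heg⟩).1

lemma IsCremonaBasis.exists_mem_closure_pair (hb : IsCremonaBasis M b) (hx : x ∈ M.E)
    (hxb : x ∉ b) : ∃ y ∈ b, ∃ z ∈ b, y ≠ z ∧ x ∈ M.closure {y, z} := by
  have hx' : x ∈ M.E \ b := ⟨hx, hxb⟩
  rw [← hb.2.2] at hx'
  simp only [mem_iUnion] at hx'
  obtain ⟨y, hy, z, hz, hyz, h⟩ := hx'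
  exact ⟨y, hy, z, hz, hyz, h.1⟩

lemma IsCremonaBasis.pair_eq_of_mem_closure {y' z' : α} (hb : IsCremonaBasis M b) (hxb : x ∉ b)
    (hy : y ∈ b) (hz : z ∈ b) (hy' : y' ∈ b) (hz' : z' ∈ b) (hyz : y ≠ z) (hyz' : y' ≠ z')
    (h : x ∈ M.closure {y, z}) (h' : x ∈ M.closure {y', z'}) : ({y, z} : Set α) = {y', z'} := by
  by_contra hne
  have hF : ∀ {p q}, p ∈ b → q ∈ b → x ∈ M.closure {p, q} → x ∈ Fij M p q :=
    fun hp hq hx ↦ ⟨hx, by rintro (rfl | rfl) <;> contradiction⟩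
  exact (hb.2.1 y hy z hz y' hy' z' hz' hyz hyz' hne).ne_of_mem (hF hy hz h) (hF hy' hz' h') rfl

lemma mRank_ground_le_ncard [M.RankFinite] (hb : M.IsBase b) : mRank M M.E ≤ b.ncard := by
  refine csSup_le ⟨0, ∅, M.empty_indep, empty_subset _, ncard_empty α⟩ ?_
  rintro n ⟨I, hI, -, rfl⟩
  obtain ⟨B', hB', hIB'⟩ := hI.exists_isBase_superset
  exact (ncard_le_ncard hIB' hB'.finite).trans_eq (hB'.ncard_eq_ncard_of_isBase hb)

lemma Matroid.IsBase.exists_mem_ne_ne [M.RankFinite] (hb : M.IsBase b) (hrk : 2 < mRank M M.E)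
    (u v : α) : ∃ w ∈ b, w ≠ u ∧ w ≠ v := by
  by_contra! h
  have hbuv : b ⊆ {u, v} := fun w hw ↦ (eq_or_ne w u).imp id (h w hw)
  have hpair : ({u, v} : Set α).ncard ≤ 2 := (ncard_insert_le u {v}).trans (by rw [ncard_singleton])
  have := (mRank_ground_le_ncard hb).trans ((ncard_le_ncard hbuv).trans hpair)
  omega

structure IsSharedLine (M : Matroid α) (b bs : Set α) (u v s p : α) : Prop where
  u_mem : u ∈ b
  v_mem : v ∈ b
  u_notMem : u ∉ bs
  v_notMem : v ∉ bs
  s_mem : s ∈ bs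
  p_mem : p ∈ bs
  s_notMem : s ∉ b
  p_notMem : p ∉ b
  u_ne_v : u ≠ v
  s_ne_p : s ≠ p
  s_mem_closure : s ∈ M.closure {u, v}
  p_mem_closure : p ∈ M.closure {u, v}
  u_mem_closure : u ∈ M.closure {s, p}
  v_mem_closure : v ∈ M.closure {s, p}

lemma closure_insert_inter_closure_insert_subset [M.RankFinite] (hsimple : MSimple M)
    (hb : M.Indep b) (hu : u ∈ b) (hv : v ∈ b) (huv : u ≠ v) (hc : c ∈ M.closure {u, v})
    (hcb : c ∉ b) :
    M.closure (insert u (b \ {u, v})) ∩ M.closure (insert c (b \ {u, v})) ⊆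
      M.closure (b \ {u, v}) := by
  set R := b \ {u, v}
  have hbE := hb.subset_ground
  have hcE : c ∈ M.E := M.closure_subset_ground _ hc
  have hcu : c ≠ u := fun h ↦ hcb (h ▸ hu)
  have huR : u ∉ R := fun h ↦ h.2 (mem_insert u _)
  have hcR : c ∉ R := fun h ↦ hcb h.1
  have hb_eq : b = insert u (insert v R) := by
    rw [insert_eq, insert_eq, ← union_assoc, ← insert_eq, union_sdiff_cancel (pair_subset hu hv)]
  have hvuc : v ∈ M.closure {u, c} := by
    rw [pair_comm] at hc ⊢
    exact hsimple.mem_closure_pair_swap hcE (hbE hu) hcu hc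
  have hunion : insert u R ∪ insert c R = insert u (insert c R) := by
    rw [insert_union, union_insert, union_self]
  have hindep : M.Indep (insert u R ∪ insert c R) := by
    rw [hunion]
    refine M.indep_of_subset_closure_of_encard_le hb ?_ ?_
    · have hsub : insert u (insert c R) ⊆ M.E :=
        insert_subset (hbE hu) (insert_subset hcE (sdiff_subset.trans hbE))
      rw [hb_eq]
      refine insert_subset (M.mem_closure_of_mem (mem_insert u _) hsub)
        (insert_subset (M.closure_subset_closure ?_ hvuc) ?_)
      · exact pair_subset (mem_insert u _) (mem_insert_of_mem u (mem_insert c R))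
      · exact (subset_insert c R).trans (subset_insert u _) |>.trans (M.subset_closure _ hsub)
    · have hvR : v ∉ R := fun h ↦ h.2 (mem_insert_of_mem u rfl)
      have huvR : u ∉ insert v R := by rintro (h | h); exacts [huv h, huR h]
      rw [hb_eq, encard_insert_of_notMem huvR, encard_insert_of_notMem hvR]
      exact (encard_insert_le _ u).trans (by gcongr; exact encard_insert_le R c)
  rw [← hindep.closure_inter_eq_inter_closure]
  refine M.closure_subset_closure fun x ⟨hxu, hxc⟩ ↦ ?_
  rcases hxu with rfl | hx
  · rcases hxc with h | h
    · exact absurd h.symm hcu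
    · exact absurd h huR
  · exact hx

namespace IsSharedLine

lemma of_mem_pair (h : IsSharedLine M b bs u v s p) (hy : y ∈ ({u, v} : Set α)) :
    y ∈ b ∧ y ∉ bs ∧ y ∈ M.closure {s, p} := by
  rcases hy with rfl | rfl
  exacts [⟨h.u_mem, h.u_notMem, h.u_mem_closure⟩, ⟨h.v_mem, h.v_notMem, h.v_mem_closure⟩]

lemma union_eq (h : IsSharedLine M b bs u v s p) : {u, v} ∪ b \ {u, v} = b :=
  union_sdiff_cancel (pair_subset h.u_mem h.v_mem)

lemma mem_pair_of_mem_closure (h : IsSharedLine M b bs u v s p) (hsimple : MSimple M)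
    (hbE : b ⊆ M.E) (hbs : IsCremonaBasis M bs) (ht : t ∈ bs) (htb : t ∉ b)
    (hy : y ∈ ({u, v} : Set α)) (hz : z ∈ b \ {u, v}) (hty : t ∈ M.closure {y, z}) :
    t ∈ ({s, p} : Set α) := by
  obtain ⟨hyb, hybs, hysp⟩ := h.of_mem_pair hy
  have hbsI := hbs.1.indep
  have htE := hbs.1.subset_ground ht
  have hzE := hbE hz.1
  have htz : t ≠ z := fun h ↦ htb (h ▸ hz.1)
  have hsp := pair_subset h.s_mem h.p_mem
  by_cases hzbs : z ∈ bs
  · have htcl : t ∈ M.closure (insert z {s, p}) :=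
      M.closure_subset_closure_of_subset_closure (pair_subset
        (M.closure_subset_closure (subset_insert z _) hysp)
        (M.mem_closure_of_mem' (mem_insert z _) hzE)) hty
    exact (hbsI.mem_of_mem_closure (insert_subset hzbs hsp) ht htcl).resolve_left htz
  obtain ⟨c, hc, e, he, hce, hzce⟩ := hbs.exists_mem_closure_pair hzE hzbs
  have key : ∀ {e}, e ∈ bs → t ≠ e → z ∈ M.closure {t, e} → t ∈ ({s, p} : Set α) := by
    intro e he hte hze
    have hytz : y ∈ M.closure {t, z} := hsimple.mem_closure_pair_swap htE hzE htz hty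
    have hyte : y ∈ M.closure {t, e} := M.closure_subset_closure_of_subset_closure
      (pair_subset (M.mem_closure_of_mem' (mem_insert t _) htE) hze) hytz
    rw [← hbs.pair_eq_of_mem_closure hybs ht he h.s_mem h.p_mem hte h.s_ne_p hyte hysp]
    exact mem_insert t {e}
  have htcl : t ∈ M.closure ({s, p} ∪ {c, e}) :=
    M.closure_subset_closure_of_subset_closure (pair_subset
      (M.closure_subset_closure subset_union_left hysp)
      (M.closure_subset_closure subset_union_right hzce)) hty
  rcases hbsI.mem_of_mem_closure (union_subset hsp (pair_subset hc he)) ht htcl with h' | rfl | rfl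
  · exact h'
  · exact key he hce hzce
  · exact key hc hce.symm (pair_comm c t ▸ hzce)

lemma bs_subset (h : IsSharedLine M b bs u v s p) (hsimple : MSimple M) (hb : IsCremonaBasis M b)
    (hbs : IsCremonaBasis M bs) : bs ⊆ M.closure {u, v} ∪ M.closure (b \ {u, v}) := by
  intro t ht
  have hbE := hb.1.subset_ground
  by_cases htb : t ∈ b
  · refine .inr (M.mem_closure_of_mem' ⟨htb, ?_⟩ (hbE htb))
    rintro (rfl | rfl)
    exacts [h.u_notMem ht, h.v_notMem ht]
  obtain ⟨y, hy, z, hz, -, hty⟩ := hb.exists_mem_closure_pair (hbs.1.subset_ground ht) htb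
  rw [← h.union_eq] at hy hz
  rcases mem_closure_pair_cases hy hz hty with h' | h' | ⟨y, hy, z, hz, hty⟩
  · exact .inl h'
  · exact .inr h'
  · rcases h.mem_pair_of_mem_closure hsimple hbE hbs ht htb hy hz hty with rfl | rfl
    exacts [.inl h.s_mem_closure, .inl h.p_mem_closure]

lemma ground_subset [M.RankFinite] (h : IsSharedLine M b bs u v s p) (hsimple : MSimple M)
    (hb : IsCremonaBasis M b) (hbs : IsCremonaBasis M bs) :
    M.E ⊆ M.closure {u, v} ∪ M.closure (b \ {u, v}) := by
  intro x hx
  have hbE := hb.1.subset_ground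
  by_cases hxbs : x ∈ bs
  · exact h.bs_subset hsimple hb hbs hxbs
  by_cases hxb : x ∈ b
  · rw [← h.union_eq] at hxb
    exact hxb.imp (M.mem_closure_of_mem' · hx) (M.mem_closure_of_mem' · hx)
  obtain ⟨y, hy, z, hz, -, hxyz⟩ := hb.exists_mem_closure_pair hx hxb
  rw [← h.union_eq] at hy hz
  rcases mem_closure_pair_cases hy hz hxyz with h' | h' | ⟨y, hy, z, hz, hxyz⟩
  · exact .inl h'
  · exact .inr h'
  obtain ⟨c, hc, e, he, -, hxce⟩ := hbs.exists_mem_closure_pair hx hxbs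
  have hbs_sub : bs ⊆ bs ∩ M.closure {u, v} ∪ M.closure (b \ {u, v}) :=
    fun c hc ↦ (h.bs_subset hsimple hb hbs hc).imp (⟨hc, ·⟩) id
  rcases mem_closure_pair_cases (hbs_sub hc) (hbs_sub he) hxce with h' | h' | ⟨c, hc, e, he, hxce⟩
  · exact .inl (M.closure_subset_closure_of_subset_closure inter_subset_right h')
  · exact .inr ((M.closure_closure _).subset h')
  right
  have hcE := hbs.1.subset_ground hc.1
  have hcb : c ∉ b := fun hcb ↦ (h.of_mem_pair
    (hb.1.indep.mem_of_mem_closure (pair_subset h.u_mem h.v_mem) hcb hc.2)).2.1 hc.1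
  have hx₁ : x ∈ M.closure (insert y (b \ {u, v})) :=
    M.closure_subset_closure (pair_subset (mem_insert y _) (mem_insert_of_mem y hz)) hxyz
  have hx₂ : x ∈ M.closure (insert c (b \ {u, v})) :=
    M.closure_subset_closure_of_subset_closure (pair_subset
      (M.mem_closure_of_mem' (mem_insert c _) hcE)
      (M.closure_subset_closure (subset_insert c _) he)) hxce
  rcases hy with rfl | rfl
  · exact closure_insert_inter_closure_insert_subset hsimple hb.1.indep h.u_mem h.v_mem h.u_ne_v
      hc.2 hcb ⟨hx₁, hx₂⟩
  · rw [pair_comm] at hc hx₁ hx₂ ⊢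
    exact closure_insert_inter_closure_insert_subset hsimple hb.1.indep h.v_mem h.u_mem
      h.u_ne_v.symm hc.2 hcb ⟨hx₁, hx₂⟩

lemma not_mconnected [M.RankFinite] (h : IsSharedLine M b bs u v s p) (hsimple : MSimple M)
    (hb : IsCremonaBasis M b) (hbs : IsCremonaBasis M bs) (hw : w ∈ b) (hwu : w ≠ u)
    (hwv : w ≠ v) : ¬ MConnected M := fun hconn ↦
  hconn.not_ground_subset_closure_union hb.1.indep (pair_subset h.u_mem h.v_mem)
    (mem_insert u {v}) ⟨hw, by rintro (rfl | rfl) <;> contradiction⟩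
    (h.ground_subset hsimple hb hbs)

end IsSharedLine

lemma isSharedLine_of_mem_closure (hsimple : MSimple M) (hb : M.Indep b) (hbsE : bs ⊆ M.E)
    (hy : y ∈ b) (hz : z ∈ b) (hyz : y ≠ z) (hybs : y ∉ bs) (hzbs : z ∉ bs) (hs : s ∈ bs)
    (hq : q ∈ bs) (hsq : s ≠ q) (hsb : s ∉ b) (hsyz : s ∈ M.closure {y, z})
    (hysq : y ∈ M.closure {s, q}) : IsSharedLine M b bs y z s q := by
  have hyE := hb.subset_ground hy
  have hsE := hbsE hs
  have hys : y ≠ s := fun h ↦ hsb (h ▸ hy)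
  have hqyz : q ∈ M.closure {y, z} := M.closure_subset_closure_of_subset_closure
    (pair_subset (M.mem_closure_of_mem' (mem_insert y _) hyE) hsyz)
    (hsimple.mem_closure_pair_swap hyE hsE hys (pair_comm s q ▸ hysq))
  have hzsq : z ∈ M.closure {s, q} := M.closure_subset_closure_of_subset_closure
    (pair_subset (M.mem_closure_of_mem' (mem_insert s _) hsE) hysq)
    (hsimple.mem_closure_pair_swap hsE hyE hys.symm (pair_comm y z ▸ hsyz))
  have hqb : q ∉ b := fun hqb ↦ by
    rcases hb.mem_of_mem_closure (pair_subset hy hz) hqb hqyz with rfl | rfl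
    exacts [hybs hq, hzbs hq]
  exact ⟨hy, hz, hybs, hzbs, hs, hq, hsb, hqb, hyz, hsq, hsyz, hqyz, hysq, hzsq⟩

lemma adjb_symm {S : Set α} (h : Adjb M b S x y) : Adjb M b S y x :=
  ⟨h.2.1, h.1, h.2.2.1.symm, fij_comm M x y ▸ h.2.2.2⟩

instance {S : Set α} : Std.Symm (Adjb M b S) := ⟨fun _ _ ↦ adjb_symm⟩

lemma mem_suppb_iff {S : Set α} : x ∈ suppb M b S ↔ x ∈ b ∩ S ∨ ∃ y, Adjb M b S x y := by
  simp only [suppb, mem_union, mem_iUnion, exists_prop, mem_insert_iff, mem_singleton_iff]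
  refine or_congr_right ⟨?_, ?_⟩
  · rintro ⟨c, hc, e, he, hce, hne, rfl | rfl⟩
    · exact ⟨e, hc, he, hce, hne⟩
    · exact ⟨c, adjb_symm ⟨hc, he, hce, hne⟩⟩
  · rintro ⟨y, hx, hy, hxy, hne⟩
    exact ⟨x, hx, y, hy, hxy, hne, .inl rfl⟩

lemma not_adjb_of_mem (hbs : M.Indep bs) (hx : x ∈ bs) (hy : y ∈ bs) : ¬ Adjb M b bs x y :=
  fun ⟨_, _, _, _, ht, htF⟩ ↦ hbs.notMem_fij hx hy htF ht

lemma not_adjb_of_notMem [M.RankFinite] (hsimple : MSimple M) (hconn : MConnected M)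
    (hrk : 2 < mRank M M.E) (hb : IsCremonaBasis M b) (hbs : IsCremonaBasis M bs)
    (hx : x ∉ bs) (hy : y ∉ bs) : ¬ Adjb M b bs x y := by
  rintro ⟨hxb, hyb, hxy, s, hs, hsF⟩
  have hsb := hb.1.indep.notMem_fij hxb hyb hsF
  have key : ∀ {y z c e}, y ∈ b → z ∈ b → y ≠ z → y ∉ bs → z ∉ bs → s ∈ M.closure {y, z} →
      c ∈ bs → e ∈ bs → c ≠ e → y ∈ M.closure {c, e} → s ∉ ({c, e} : Set α) := by
    intro y z c e hy hz hyz hybs hzbs hsyz hc he hce hyce hsce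
    obtain ⟨q, hq, hsq, hysq⟩ : ∃ q ∈ bs, s ≠ q ∧ y ∈ M.closure {s, q} := by
      rcases hsce with rfl | rfl
      exacts [⟨e, he, hce, hyce⟩, ⟨c, hc, hce.symm, pair_comm c s ▸ hyce⟩]
    obtain ⟨w, hw, hwy, hwz⟩ := hb.1.exists_mem_ne_ne hrk y z
    exact (isSharedLine_of_mem_closure hsimple hb.1.indep hbs.1.subset_ground hy hz hyz hybs
      hzbs hs hq hsq hsb hsyz hysq).not_mconnected hsimple hb hbs hw hwy hwz hconn
  have hbE := hb.1.subset_ground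
  obtain ⟨c, hc, e, he, hce, hxce⟩ := hbs.exists_mem_closure_pair (hbE hxb) hx
  obtain ⟨c', hc', e', he', hce', hyce'⟩ := hbs.exists_mem_closure_pair (hbE hyb) hy
  have hscl : s ∈ M.closure ({c, e} ∪ {c', e'}) := M.closure_subset_closure_of_subset_closure
    (pair_subset (M.closure_subset_closure subset_union_left hxce)
      (M.closure_subset_closure subset_union_right hyce')) hsF.1
  rcases hbs.1.indep.mem_of_mem_closure (union_subset (pair_subset hc he)
    (pair_subset hc' he')) hs hscl with h | h
  · exact key hxb hyb hxy hx hy hsF.1 hc he hce hxce h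
  · exact key hyb hxb hxy.symm hy hx (pair_comm x y ▸ hsF.1) hc' he' hce' hyce' h

lemma pair_eq_of_mem_fij (hsimple : MSimple M) (hb : M.Indep b) (hbs : IsCremonaBasis M bs)
    {a a' t t' : α} (hu : u ∈ b) (hubs : u ∉ bs) (ha : a ∈ b ∩ bs) (ha' : a' ∈ b ∩ bs)
    (ht : t ∈ bs ∩ Fij M u a) (ht' : t' ∈ bs ∩ Fij M u a') :
    ({t, a} : Set α) = {t', a'} := by
  have hmem : ∀ {a t}, a ∈ b ∩ bs → t ∈ bs ∩ Fij M u a → t ≠ a ∧ u ∈ M.closure {t, a} := by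
    intro a t ha ht
    have htb := hb.notMem_fij hu ha.1 ht.2
    have hta : t ≠ a := fun h ↦ htb (h ▸ ha.1)
    have hbsE := hbs.1.subset_ground
    exact ⟨hta, hsimple.mem_closure_pair_swap (hbsE ht.1) (hbsE ha.2) hta ht.2.1⟩
  obtain ⟨hta, hut⟩ := hmem ha ht
  obtain ⟨hta', hut'⟩ := hmem ha' ht'
  exact hbs.pair_eq_of_mem_closure hubs ht.1 ha.2 ht'.1 ha'.2 hta hta' hut hut'

lemma eq_of_adjb_of_adjb (hsimple : MSimple M) (hb : M.Indep b) (hbs : IsCremonaBasis M bs)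
    {a a' : α} (hubs : u ∉ bs) (ha : a ∈ bs) (ha' : a' ∈ bs) (h : Adjb M b bs u a)
    (h' : Adjb M b bs u a') : a = a' := by
  obtain ⟨hu, hab, -, t, ht⟩ := h
  obtain ⟨-, hab', -, t', ht'⟩ := h'
  rcases pair_eq_pair_iff.1 (pair_eq_of_mem_fij hsimple hb hbs hu hubs ⟨hab, ha⟩ ⟨hab', ha'⟩ ht ht')
    with ⟨-, h⟩ | ⟨-, rfl⟩
  · exact h
  · exact absurd hab (hb.notMem_fij hu hab' ht'.2)

lemma eq_of_mem_fij (hsimple : MSimple M) (hb : M.Indep b) (hbs : IsCremonaBasis M bs)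
    {a t t' : α} (hu : u ∈ b) (hubs : u ∉ bs) (ha : a ∈ b ∩ bs) (ht : t ∈ bs ∩ Fij M a u)
    (ht' : t' ∈ bs ∩ Fij M a u) : t = t' := by
  rw [fij_comm] at ht ht'
  rcases pair_eq_pair_iff.1 (pair_eq_of_mem_fij hsimple hb hbs hu hubs ha ha ht ht')
    with ⟨h, -⟩ | ⟨h, h'⟩
  exacts [h, h.trans h']

lemma inter_fij_eq_empty_of_notMem [M.RankFinite] (hsimple : MSimple M) (hconn : MConnected M)
    (hrk : 2 < mRank M M.E) (hb : IsCremonaBasis M b) (hbs : IsCremonaBasis M bs)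
    (hu : u ∈ b) (hv : v ∈ b) (hubs : u ∉ bs) (hvbs : v ∉ bs) : bs ∩ Fij M u v = ∅ := by
  rw [← not_nonempty_iff_eq_empty]
  rintro ⟨t, ht, htF⟩
  obtain rfl | huv := eq_or_ne u v
  · rw [Fij, pair_eq_singleton] at htF
    exact hsimple.notMem_closure_singleton_s7 (hbs.1.subset_ground ht) (hb.1.subset_ground hu)
      (fun h ↦ htF.2 h) htF.1
  · exact not_adjb_of_notMem hsimple hconn hrk hb hbs hubs hvbs ⟨hu, hv, huv, t, ht, htF⟩

lemma Relation.ReflTransGen.eq_or_rel_of_star {r : α → α → Prop} {P : α → Prop}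
    (hsymm : ∀ {x y}, r x y → r y x) (hP : ∀ {x y}, r x y → P x → ¬ P y)
    (huniq : ∀ {x y y'}, ¬ P x → r x y → r x y' → y = y') (ha : P a)
    (h : Relation.ReflTransGen r a y) : y = a ∨ r a y := by
  induction h with
  | refl => exact .inl rfl
  | tail _ hmc ih =>
    rcases ih with rfl | ham
    · exact .inr hmc
    · exact .inl (huniq (hP ham ha) hmc (hsymm ham))

lemma exists_center_of_mem_suppb
    (hin : ∀ {y z}, Adjb M b bs y z → y ∉ bs → z ∈ bs)
    (hout : ∀ {y z}, Adjb M b bs y z → y ∈ bs → z ∉ bs)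
    (huniq : ∀ {u a a'}, u ∉ bs → Adjb M b bs u a → Adjb M b bs u a' → a = a')
    (hx : x ∈ suppb M b bs) :
    ∃ b0 ∈ b ∩ bs, b0 ∈ compOf M b bs x ∧ ∀ y ∈ compOf M b bs x, y = b0 ∨ Adjb M b bs b0 y := by
  obtain ⟨b0, hb0, hxb0⟩ : ∃ b0 ∈ b ∩ bs, x = b0 ∨ Adjb M b bs x b0 := by
    rcases mem_suppb_iff.1 hx with hx | ⟨y, hxy⟩
    · exact ⟨x, hx, .inl rfl⟩
    by_cases hxbs : x ∈ bs
    · exact ⟨x, ⟨hxy.1, hxbs⟩, .inl rfl⟩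
    · exact ⟨y, ⟨hxy.2.1, hin hxy hxbs⟩, .inr hxy⟩
  have hreach : Relation.ReflTransGen (Adjb M b bs) x b0 := hxb0.elim (· ▸ .refl) .single
  have hback : Relation.ReflTransGen (Adjb M b bs) b0 x := Std.Symm.symm _ _ hreach
  refine ⟨b0, hb0, ⟨mem_suppb_iff.2 (.inl hb0), hreach⟩, fun y hy ↦ ?_⟩
  exact (hback.trans hy.2).eq_or_rel_of_star adjb_symm hout huniq hb0.2

theorem stmt7_general (M : Matroid α) (hfin : M.E.Finite) (hsimple : MSimple M)
    (hconn : MConnected M) (d : ℕ) (hd : 2 ≤ d) (hrk : mRank M M.E = d + 1)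
    (b bs : Set α) (hb : IsCremonaBasis M b) (hbs : IsCremonaBasis M bs) :
    ∀ x ∈ suppb M b bs,
      ∃ b0 ∈ b ∩ bs,
        b0 ∈ compOf M b bs x ∧
        compOf M b bs x ∩ bs = {b0} ∧
        (∀ u ∈ compOf M b bs x, u ≠ b0 → ∃! e, e ∈ bs ∩ Fij M b0 u) ∧
        (∀ u ∈ compOf M b bs x, ∀ v ∈ compOf M b bs x,
          u ≠ b0 → v ≠ b0 → bs ∩ Fij M u v = ∅) := by
  intro x hx
  have : M.Finite := ⟨hfin⟩
  have hrk' : 2 < mRank M M.E := by omega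
  have hout : ∀ {y z}, Adjb M b bs y z → y ∈ bs → z ∉ bs :=
    fun h hy hz ↦ not_adjb_of_mem hbs.1.indep hy hz h
  have hin : ∀ {y z}, Adjb M b bs y z → y ∉ bs → z ∈ bs :=
    fun h hy ↦ by_contra fun hz ↦ not_adjb_of_notMem hsimple hconn hrk' hb hbs hy hz h
  obtain ⟨b0, hb0, hb0x, hcomp⟩ := exists_center_of_mem_suppb hin hout
    (fun hu h h' ↦ eq_of_adjb_of_adjb hsimple hb.1.indep hbs hu (hin h hu) (hin h' hu) h h') hx
  have hnbr : ∀ u ∈ compOf M b bs x, u ≠ b0 → u ∈ b ∧ u ∉ bs ∧ Adjb M b bs b0 u :=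
    fun u hu hne ↦ have h := (hcomp u hu).resolve_left hne; ⟨h.2.1, hout h hb0.2, h⟩
  refine ⟨b0, hb0, hb0x, ?_, fun u hu hne ↦ ?_, fun u hu v hv hu0 hv0 ↦ ?_⟩
  · refine subset_antisymm (fun y ⟨hy, hybs⟩ ↦ ?_) (singleton_subset_iff.2 ⟨hb0x, hb0.2⟩)
    by_contra hne
    exact (hnbr y hy hne).2.1 hybs
  · obtain ⟨hub, hubs, -, -, -, e, he⟩ := hnbr u hu hne
    exact ⟨e, he, fun e' he' ↦ eq_of_mem_fij hsimple hb.1.indep hbs hub hubs hb0 he' he⟩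
  · obtain ⟨hub, hubs, -⟩ := hnbr u hu hu0
    obtain ⟨hvb, hvbs, -⟩ := hnbr v hv hv0
    exact inter_fij_eq_empty_of_notMem hsimple hconn hrk' hb hbs hub hvb hubs hvbs

/-- If a simple connected matroid of rank `d+1 ≥ 3` has two different
Cremona bases `b` and `b*`, then every connected component of `G_b(b*)` is a simple
star whose center is the unique vertex in `b ∩ b*` belonging to the component. -/
theorem stmt7 (M : Matroid α) (hfin : M.E.Finite) (hsimple : MSimple M)
    (hconn : MConnected M) (d : ℕ) (hd : 2 ≤ d) (hrk : mRank M M.E = d + 1)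
    (b bs : Set α) (hb : IsCremonaBasis M b) (hbs : IsCremonaBasis M bs) (hne : b ≠ bs) :
    ∀ x ∈ suppb M b bs,
      ∃ b0 ∈ b ∩ bs,
        b0 ∈ compOf M b bs x ∧
        compOf M b bs x ∩ bs = {b0} ∧
        (∀ u ∈ compOf M b bs x, u ≠ b0 → ∃! e, e ∈ bs ∩ Fij M b0 u) ∧
        (∀ u ∈ compOf M b bs x, ∀ v ∈ compOf M b bs x,
          u ≠ b0 → v ≠ b0 → bs ∩ Fij M u v = ∅) :=
  stmt7_general M hfin hsimple hconn d hd hrk b bs hb hbs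
end
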